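/- arXiv:math/9912147 — 2 statements merged into one kernel-verified Lean document; each statement's English description precedes it below -/
import Mathlib

section
/- Let 1 ≤ N ≤ s be integers, let A = {1, …, N} ⊆ {1, …, s}, and let ρ be a permutation of {1, …, s} such that the union of the forward ρ-orbits of the elements of A is all of {1, …, s} (i.e. ρ ∈ 𝔖_{s;N}). Let ρ̃ be the first-return permutation of A, ρ̃(i) = ρ^{s_i}(i) where s_i = min{m > 0 : ρ^m(i) ∈ A}. Then the signs satisfy sgn(ρ) = (−1)^{s−N} · sgn(ρ̃); equivalently, sgn(ρ) ≡ sgn(ρ̃) + (s − N) modulo 2, where sgn is counted additively mod 2. -/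
/-!
The sign of a permutation of a finite set `X` is `(-1) ^ (|X| + c)`, where `c` counts its cycles
including fixed points. Every `ρ`-cycle meets `A`, and the first-return map walks along a
`ρ`-cycle from one point of `A` to the next, so the `ρ̃`-cycles are exactly the traces on `A` of
the `ρ`-cycles. Hence `ρ` and `ρ̃` have the same number of cycles, and their signs differ by
`(-1) ^ (s - N)`.
-/

open Equiv Function

namespace Equiv.Perm

variable {α β : Type*}

/-- Unlike in `cycleType`, fixed points count as cycles here. -/
noncomputable def cycleCount (σ : Perm α) : ℕ := Nat.card (Quotient (SameCycle.setoid σ))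

section CycleCount

variable [Fintype α] [DecidableEq α] (σ : Perm α)

def cycleCode (x : α) : fixedPoints σ ⊕ σ.cycleFactorsFinset :=
  if h : σ x = x then .inl ⟨x, h⟩
  else .inr ⟨σ.cycleOf x, cycleOf_mem_cycleFactorsFinset_iff.mpr (mem_support.mpr h)⟩

theorem cycleCode_eq_iff {x y : α} : σ.cycleCode x = σ.cycleCode y ↔ σ.SameCycle x y := by
  by_cases hx : σ x = x <;> by_cases hy : σ y = y
  · simp only [cycleCode, hx, hy, dite_true, Sum.inl.injEq, Subtype.ext_iff]
    exact ⟨fun h => h ▸ .refl σ x, fun h => h.eq_of_left hx⟩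
  · simpa [cycleCode, hx, hy] using fun h => hy (h.apply_eq_self_iff.mp hx)
  · simpa [cycleCode, hx, hy] using fun h => hx (h.apply_eq_self_iff.mpr hy)
  · simpa [cycleCode, hx, hy] using
      (sameCycle_iff_cycleOf_eq_of_mem_support (mem_support.mpr hx) (mem_support.mpr hy)).symm

theorem cycleCode_surjective : Surjective σ.cycleCode := by
  rintro (⟨x, hx⟩ | ⟨c, hc⟩)
  · exact ⟨x, by simp [cycleCode, show σ x = x from hx]⟩
  · obtain ⟨x, hxc⟩ := (mem_cycleFactorsFinset_iff.mp hc).1.nonempty_support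
    have hx : σ x ≠ x := mem_support.mp (mem_cycleFactorsFinset_support_le hc hxc)
    exact ⟨x, by simp [cycleCode, hx, (cycle_is_cycleOf hxc hc).symm]⟩

theorem cycleCount_eq_card_fixedPoints_add_card_cycleType :
    σ.cycleCount = Fintype.card (fixedPoints σ) + Multiset.card σ.cycleType := by
  have hbij : Bijective (Quotient.lift (s := SameCycle.setoid σ) σ.cycleCode
      fun _ _ => (σ.cycleCode_eq_iff).mpr) :=
    ⟨Quotient.ind₂ fun _ _ h => Quotient.sound ((σ.cycleCode_eq_iff).mp h),
      fun c => let ⟨x, hx⟩ := σ.cycleCode_surjective c; ⟨Quotient.mk _ x, hx⟩⟩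
  rw [cycleCount, Nat.card_eq_of_bijective _ hbij, Nat.card_sum, Nat.card_eq_fintype_card,
    Nat.card_eq_fintype_card, Fintype.card_coe, cycleType_def, Multiset.card_map]
  rfl

theorem sign_eq_neg_one_pow_card_add_cycleCount :
    sign σ = (-1 : ℤˣ) ^ (Fintype.card α + σ.cycleCount) := by
  have hsum := σ.sum_cycleType_le
  have hexp : Fintype.card α + σ.cycleCount =
      σ.cycleType.sum + Multiset.card σ.cycleType + 2 * (Fintype.card α - σ.cycleType.sum) := by
    rw [cycleCount_eq_card_fixedPoints_add_card_cycleType, card_fixedPoints]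
    omega
  rw [sign_of_cycleType, hexp, pow_add _ _ (2 * _), pow_mul]
  simp

end CycleCount

variable {ρ : Perm α} {ρt : Perm β} {e : β → α} {t : β → ℕ}

theorem SameCycle.map_of_apply_eq_pow_apply [Finite β] (hstep : ∀ i, e (ρt i) = (ρ ^ t i) (e i))
    {i j : β} (h : ρt.SameCycle i j) : ρ.SameCycle (e i) (e j) := by
  obtain ⟨k, -, rfl⟩ := h.exists_pow_eq'
  clear h
  induction k with
  | zero => rfl
  | succ k ih => rw [pow_succ', mul_apply, hstep]; exact sameCycle_pow_right.mpr ih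

/-- `ρt` is the first-return map `ρ̃` of `ρ` to `A = Set.range e`, with return times `s_i = t i`. -/
structure IsFirstReturnMap (ρ : Perm α) (e : β → α) (ρt : Perm β) (t : β → ℕ) : Prop where
  pos : ∀ i, 0 < t i
  le_of_mem_range : ∀ i k, 0 < k → (ρ ^ k) (e i) ∈ Set.range e → t i ≤ k
  apply_eq : ∀ i, e (ρt i) = (ρ ^ t i) (e i)

namespace IsFirstReturnMap

theorem sameCycle_of_pow_apply_eq (h : IsFirstReturnMap ρ e ρt t) (he : Injective e) (k : ℕ) :
    ∀ i j, (ρ ^ k) (e i) = e j → ρt.SameCycle i j := by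
  induction k using Nat.strong_induction_on with
  | _ k ih =>
    intro i j hk
    rcases Nat.eq_zero_or_pos k with rfl | hk0
    · exact he hk ▸ .refl ρt i
    have hle : t i ≤ k := h.le_of_mem_range i k hk0 ⟨j, hk.symm⟩
    have hrest : (ρ ^ (k - t i)) (e (ρt i)) = e j := by
      rw [h.apply_eq, ← mul_apply, ← pow_add, Nat.sub_add_cancel hle, hk]
    exact sameCycle_apply_left.mp (ih _ (Nat.sub_lt hk0 (h.pos i)) _ _ hrest)

theorem sameCycle_iff [Finite α] [Finite β] (h : IsFirstReturnMap ρ e ρt t) (he : Injective e)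
    {i j : β} : ρt.SameCycle i j ↔ ρ.SameCycle (e i) (e j) :=
  ⟨SameCycle.map_of_apply_eq_pow_apply h.apply_eq, fun hij =>
    let ⟨k, _, hk⟩ := hij.exists_pow_eq'
    h.sameCycle_of_pow_apply_eq he k i j hk⟩

theorem cycleCount_eq [Finite α] [Finite β] (h : IsFirstReturnMap ρ e ρt t) (he : Injective e)
    (hcover : ∀ x, ∃ i, ρ.SameCycle (e i) x) : ρ.cycleCount = ρt.cycleCount := by
  have hbij : Bijective (Quotient.map (sa := SameCycle.setoid ρt) (sb := SameCycle.setoid ρ) e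
      fun _ _ => (h.sameCycle_iff he).mp) :=
    ⟨Quotient.ind₂ fun _ _ hij => Quotient.sound ((h.sameCycle_iff he).mpr (Quotient.exact hij)),
      Quotient.ind fun x => let ⟨i, hi⟩ := hcover x; ⟨Quotient.mk _ i, Quotient.sound hi⟩⟩
  exact (Nat.card_eq_of_bijective _ hbij).symm

end IsFirstReturnMap

end Equiv.Perm

theorem sign_first_return_perm_general
    (s N : ℕ) (hNs : N ≤ s)
    (ρ : Equiv.Perm (Fin s))
    -- ρ ∈ 𝔖_{s;N}:
    (horb : ∀ x : Fin s, ∃ i : Fin N, ∃ m : ℕ, (ρ ^ m) (Fin.castLE hNs i) = x)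
    -- first return times:
    (sret : Fin N → ℕ)
    (hsret : ∀ i : Fin N,
      sret i = sInf {m : ℕ | 0 < m ∧ ((ρ ^ m) (Fin.castLE hNs i)).val < N})
    -- the first-return permutation ρ̃ of A:
    (ρt : Equiv.Perm (Fin N))
    (hρt : ∀ i : Fin N, (Fin.castLE hNs (ρt i) : Fin s) = (ρ ^ sret i) (Fin.castLE hNs i)) :
    Equiv.Perm.sign ρ = (-1 : ℤˣ) ^ (s - N) * Equiv.Perm.sign ρt := by
  have hreturns (i : Fin N) : {m : ℕ | 0 < m ∧ ((ρ ^ m) (Fin.castLE hNs i)).val < N}.Nonempty :=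
    ⟨orderOf ρ, orderOf_pos ρ, by simp [pow_orderOf_eq_one]⟩
  have hfirst : Perm.IsFirstReturnMap ρ (Fin.castLE hNs) ρt sret :=
    ⟨fun i => (hsret i ▸ Nat.sInf_mem (hreturns i)).1,
      fun i _ hk ⟨j, hj⟩ => hsret i ▸ Nat.sInf_le ⟨hk, hj ▸ j.isLt⟩, hρt⟩
  have hcount : ρ.cycleCount = ρt.cycleCount :=
    hfirst.cycleCount_eq (Fin.castLE_injective hNs)
      fun x => let ⟨i, m, hm⟩ := horb x; ⟨i, m, by rwa [zpow_natCast]⟩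
  rw [Perm.sign_eq_neg_one_pow_card_add_cycleCount, Perm.sign_eq_neg_one_pow_card_add_cycleCount,
    hcount, Fintype.card_fin, Fintype.card_fin, ← pow_add]
  congr 1
  omega

theorem sign_first_return_perm
    (s N : ℕ) (h1 : 1 ≤ N) (hNs : N ≤ s)
    (ρ : Equiv.Perm (Fin s))
    -- ρ ∈ 𝔖_{s;N}:
    (horb : ∀ x : Fin s, ∃ i : Fin N, ∃ m : ℕ, (ρ ^ m) (Fin.castLE hNs i) = x)
    -- first return times:
    (sret : Fin N → ℕ)
    (hsret : ∀ i : Fin N,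
      sret i = sInf {m : ℕ | 0 < m ∧ ((ρ ^ m) (Fin.castLE hNs i)).val < N})
    -- the first-return permutation ρ̃ of A:
    (ρt : Equiv.Perm (Fin N))
    (hρt : ∀ i : Fin N, (Fin.castLE hNs (ρt i) : Fin s) = (ρ ^ sret i) (Fin.castLE hNs i)) :
    Equiv.Perm.sign ρ = (-1 : ℤˣ) ^ (s - N) * Equiv.Perm.sign ρt :=
  sign_first_return_perm_general s N hNs ρ horb sret hsret ρt hρt
end

section
/- Let k be a field, V a k-vector space of finite dimension n with basis e_1, …, e_n, and f : V → V a linear endomorphism with matrix M (so f(e_j) = Σ_i M_{ij} e_i). For every 0 ≤ t ≤ n, the trace of the induced endomorphism Λ^t f of the t-th exterior power Λ^t V equals the sum of the principal t×t minors of M: tr(Λ^t f) = Σ_{B ⊆ {1,…,n}, |B| = t} det(M_{B×B}) = Σ_{B, |B|=t} Σ_{τ ∈ 𝔖_B} sgn(τ) ∏_{b ∈ B} M_{τ(b), b}, where M_{B×B} denotes the submatrix of M with rows and columns indexed by B. -/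
/-!
The wedges `e_S = e_{s₁} ∧ ⋯ ∧ e_{s_t}` over `t`-subsets `S = {s₁ < ⋯ < s_t}` form a basis of
`Λᵗ V`, and the coefficient of `e_S` in `Λᵗ f (e_S) = f e_{s₁} ∧ ⋯ ∧ f e_{s_t}` is
`det (e*_{s_j} (f e_{s_i}))ᵢⱼ`, the principal minor of `M` on `S`. Summing these diagonal
coefficients gives the trace.
-/

open Module Set.powersetCard

namespace exteriorPower

variable {R M N : Type*} [CommRing R] [AddCommGroup M] [Module R M] [AddCommGroup N] [Module R N]

lemma coe_map_apply (n : ℕ) (f : M →ₗ[R] N) (x : ⋀[R]^n M) :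
    (map n f x : ExteriorAlgebra R N) = ExteriorAlgebra.map f x := by
  suffices (⋀[R]^n N).subtype ∘ₗ map n f =
      (ExteriorAlgebra.map f).toLinearMap ∘ₗ (⋀[R]^n M).subtype from
    LinearMap.congr_fun this x
  ext v
  simp [map_apply_ιMulti, ExteriorAlgebra.map_apply_ιMulti]

variable {I : Type*} [LinearOrder I] [Fintype I]

lemma basis_repr_map_basis_self (b : Basis I R M) (f : M →ₗ[R] M) (n : ℕ)
    (s : Set.powersetCard I n) :
    (b.exteriorPower n).repr (map n f (b.exteriorPower n s)) s =
      ((LinearMap.toMatrix b b f).submatrix (↑) (↑) : Matrix s.val s.val R).det := by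
  rw [basis_apply, ιMulti_family, map_apply_ιMulti, basis_repr_apply, ιMultiDual_apply_ιMulti]
  have hminor :
      (Matrix.of fun i j => b.coord (ofFinEmbEquiv.symm s j) ((f ∘ b ∘ ofFinEmbEquiv.symm s) i)) =
      (((LinearMap.toMatrix b b f).submatrix (↑) (↑) : Matrix s.val s.val R).submatrix
        (orderIsoOfFin s).toEquiv (orderIsoOfFin s).toEquiv).transpose := by
    ext i j
    rw [Matrix.transpose_apply, Matrix.submatrix_apply, Matrix.submatrix_apply,
      LinearMap.toMatrix_apply]
    rfl
  rw [hminor, Matrix.det_transpose, Matrix.det_submatrix_equiv_self]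

theorem trace_map (b : Basis I R M) (f : M →ₗ[R] M) (n : ℕ) :
    LinearMap.trace R _ (map n f) = ∑ s : Set.powersetCard I n,
      ((LinearMap.toMatrix b b f).submatrix (↑) (↑) : Matrix s.val s.val R).det := by
  rw [LinearMap.trace_eq_matrix_trace R (b.exteriorPower n), Matrix.trace]
  refine Finset.sum_congr rfl fun s _ => ?_
  rw [Matrix.diag_apply, LinearMap.toMatrix_apply, basis_repr_map_basis_self]

end exteriorPower

open exteriorPower in
theorem trace_exteriorPower_eq_sum_principal_minors_general
    {k V : Type*} [Field k] [AddCommGroup V] [Module k V]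
    (n : ℕ) (e : Module.Basis (Fin n) k V)
    (f : V →ₗ[k] V) (M : Matrix (Fin n) (Fin n) k)
    (hM : ∀ j, f (e j) = ∑ i : Fin n, M i j • e i)
    (t : ℕ)
    (F : ⋀[k]^t V →ₗ[k] ⋀[k]^t V)
    (hF : ∀ x : ⋀[k]^t V,
      (F x : ExteriorAlgebra k V) = ExteriorAlgebra.map f (x : ExteriorAlgebra k V)) :
    LinearMap.trace k (⋀[k]^t V) F =
      ∑ B ∈ Finset.powersetCard t (Finset.univ : Finset (Fin n)),
        (M.submatrix (fun i : ↥B => (i : Fin n)) (fun i : ↥B => (i : Fin n))).det ∧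
    LinearMap.trace k (⋀[k]^t V) F =
      ∑ B ∈ Finset.powersetCard t (Finset.univ : Finset (Fin n)),
        ∑ τ : Equiv.Perm ↥B, ((Equiv.Perm.sign τ : ℤ) : k) *
          ∏ b : ↥B, M (τ b) b := by
  have hF_eq : F = map t f := LinearMap.ext fun x => Subtype.ext <| by rw [hF, coe_map_apply]
  have hM_eq : LinearMap.toMatrix e e f = M := by
    ext i j
    simp [LinearMap.toMatrix_apply, hM, Finsupp.single_apply]
  have h_minors : LinearMap.trace k (⋀[k]^t V) F =
      ∑ B ∈ Finset.powersetCard t (Finset.univ : Finset (Fin n)),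
        (M.submatrix (fun i : ↥B => (i : Fin n)) (fun i : ↥B => (i : Fin n))).det := by
    rw [hF_eq, trace_map e, hM_eq]
    exact (Finset.sum_subtype _
      (fun _ => Finset.mem_powersetCard_univ.trans Set.powersetCard.mem_iff.symm)
      fun B : Finset (Fin n) => (M.submatrix (fun i : ↥B => (i : Fin n)) (↑)).det).symm
  refine ⟨h_minors, h_minors.trans (Finset.sum_congr rfl fun B _ => ?_)⟩
  simp [Matrix.det_apply']

theorem trace_exteriorPower_eq_sum_principal_minors
    {k V : Type*} [Field k] [AddCommGroup V] [Module k V]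
    (n : ℕ) (e : Module.Basis (Fin n) k V)
    (f : V →ₗ[k] V) (M : Matrix (Fin n) (Fin n) k)
    (hM : ∀ j, f (e j) = ∑ i : Fin n, M i j • e i)
    (t : ℕ) (ht : t ≤ n)
    (F : ⋀[k]^t V →ₗ[k] ⋀[k]^t V)
    (hF : ∀ x : ⋀[k]^t V,
      (F x : ExteriorAlgebra k V) = ExteriorAlgebra.map f (x : ExteriorAlgebra k V)) :
    LinearMap.trace k (⋀[k]^t V) F =
      ∑ B ∈ Finset.powersetCard t (Finset.univ : Finset (Fin n)),
        (M.submatrix (fun i : ↥B => (i : Fin n)) (fun i : ↥B => (i : Fin n))).det ∧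
    LinearMap.trace k (⋀[k]^t V) F =
      ∑ B ∈ Finset.powersetCard t (Finset.univ : Finset (Fin n)),
        ∑ τ : Equiv.Perm ↥B, ((Equiv.Perm.sign τ : ℤ) : k) *
          ∏ b : ↥B, M (τ b) b :=
  trace_exteriorPower_eq_sum_principal_minors_general n e f M hM t F hF
end
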